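/- For a negative program N and interpretation I ⊆ A, the composition N ∘ I equals the Gelfond–Lifschitz reduct of N with respect to I: N ∘ I = gN^I = { head(r) : r ∈ N, I ∩ neg-atoms(r) = ∅ }. -/
import Mathlib


open Classical Finset

/-- A rule of an answer set program: a head atom, a set of positive body atoms,
and a set of negated body atoms. -/
structure Rule (α : Type*) where
  head : α
  pos : Finset α
  neg : Finset α
deriving DecidableEq

instance {α : Type*} [DecidableEq α] [Fintype α] : Fintype (Rule α) :=
  Fintype.ofEquiv (α × Finset α × Finset α)
    { toFun := fun x => ⟨x.1, x.2.1, x.2.2⟩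
      invFun := fun r => (r.head, r.pos, r.neg)
      left_inv := fun _ => rfl
      right_inv := fun _ => rfl }

variable {α : Type*} [Fintype α] [DecidableEq α]

/-- Program-level negation (the tf/∨/De Morgan construction):
for each head atom `a`, either no rule of `R` has head `a` (then the fact `a` is produced),
or one negated literal is chosen from the body of each rule of `R` with head `a`
(De Morgan + distributivity); heads of facts of `R` are dropped (their body `{t}` negates to `f`). -/
noncomputable def notProg {α : Type*} [Fintype α] [DecidableEq α]
    (R : Finset (Rule α)) : Finset (Rule α) :=
  Finset.univ.filter (fun t =>
    ((∀ s ∈ R, s.head ≠ t.head) ∧ t.pos = ∅ ∧ t.neg = ∅) ∨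
    ((∃ s ∈ R, s.head = t.head) ∧
      ∃ c : Rule α → α ⊕ α,
        (∀ s ∈ R, s.head = t.head →
          Sum.elim (fun b => b ∈ s.pos) (fun b => b ∈ s.neg) (c s)) ∧
        t.pos.image Sum.inl ∪ t.neg.image Sum.inr =
          (R.filter (fun s => s.head = t.head)).image (fun s => Sum.swap (c s))))

/-- Sequential composition of answer set programs. -/
noncomputable def comp {α : Type*} [Fintype α] [DecidableEq α]
    (P R : Finset (Rule α)) : Finset (Rule α) :=
  Finset.univ.filter (fun t => ∃ r ∈ P, ∃ S N : Finset (Rule α),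
    S ⊆ R ∧ N ⊆ notProg R ∧
    S.card = r.pos.card ∧ N.card = r.neg.card ∧
    S.image Rule.head = r.pos ∧ N.image Rule.head = r.neg ∧
    t.head = r.head ∧
    t.pos = (S ∪ N).sup Rule.pos ∧
    t.neg = (S ∪ N).sup Rule.neg)

/-- The unit program `1_A = {a ← a : a ∈ A}`. -/
def unitP (α : Type*) [Fintype α] [DecidableEq α] : Finset (Rule α) :=
  Finset.univ.image (fun a => (⟨a, {a}, ∅⟩ : Rule α))

/-- An interpretation viewed as a fact program. -/
def interp {α : Type*} [Fintype α] [DecidableEq α] (I : Finset α) : Finset (Rule α) :=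
  I.image (fun a => (⟨a, ∅, ∅⟩ : Rule α))

/-- The facts (rules with empty body) of a program. -/
noncomputable def factsOf {α : Type*} [Fintype α] [DecidableEq α]
    (P : Finset (Rule α)) : Finset (Rule α) :=
  P.filter (fun r => r.pos = ∅ ∧ r.neg = ∅)

/-- The van Emden–Kowalski immediate consequence operator. -/
noncomputable def TP {α : Type*} [Fintype α] [DecidableEq α]
    (P : Finset (Rule α)) (I : Finset α) : Finset α :=
  (P.filter (fun r => r.pos ⊆ I ∧ Disjoint r.neg I)).image Rule.head

lemma mem_interp {α : Type*} [Fintype α] [DecidableEq α] {I : Finset α} {t : Rule α} :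
    t ∈ interp I ↔ t.head ∈ I ∧ t.pos = ∅ ∧ t.neg = ∅ := by
  simp only [interp, Finset.mem_image]
  constructor
  · rintro ⟨a, ha, rfl⟩; exact ⟨ha, rfl, rfl⟩
  · rintro ⟨h1, h2, h3⟩; exact ⟨t.head, h1, by cases t; simp_all⟩

lemma notProg_interp {α : Type*} [Fintype α] [DecidableEq α] (I : Finset α) :
    notProg (interp I) = interp Iᶜ := by
  ext t
  simp only [notProg, Finset.mem_filter, Finset.mem_univ, true_and]
  rw [mem_interp, Finset.mem_compl]
  constructor
  · rintro (⟨h1, h2, h3⟩ | ⟨⟨s, hs, hsh⟩, c, hc, _⟩)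
    · refine ⟨fun hI => h1 ⟨t.head, ∅, ∅⟩ (mem_interp.2 ⟨hI, rfl, rfl⟩) rfl, h2, h3⟩
    · exfalso
      have := hc s hs hsh
      obtain ⟨h1, h2, h3⟩ := mem_interp.1 hs
      cases hcs : c s <;> rw [hcs] at this <;> simp [h2, h3] at this
  · rintro ⟨h1, h2, h3⟩
    left
    exact ⟨fun s hs hsh => h1 (hsh ▸ (mem_interp.1 hs).1), h2, h3⟩

/-- for a negative program `N` and interpretation `I`,
`N ∘ I` equals the Gelfond–Lifschitz reduct `gN^I = {head(r) : r ∈ N, I ∩ neg(r) = ∅}`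
(a fact program). -/
theorem negative_comp_interp {α : Type*} [Fintype α] [DecidableEq α]
    (N : Finset (Rule α)) (I : Finset α) (hN : ∀ r ∈ N, r.pos = ∅) :
    comp N (interp I) =
      interp ((N.filter (fun r => Disjoint r.neg I)).image Rule.head) := by
  ext t
  simp only [comp, Finset.mem_filter, Finset.mem_univ, true_and, notProg_interp]
  constructor
  · rintro ⟨r, hr, S, M, hS, hM, hScard, hMcard, hSh, hMh, th, tp, tn⟩
    have hpos := hN r hr
    have hS0 : S = ∅ := by
      rw [hpos] at hSh
      exact Finset.image_eq_empty.1 hSh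
    subst hS0
    have hMfacts : ∀ n ∈ M, n.head ∉ I ∧ n.pos = ∅ ∧ n.neg = ∅ := by
      intro n hn
      have := mem_interp.1 (hM hn)
      simpa [Finset.mem_compl] using this
    have hdisj : Disjoint r.neg I := by
      rw [Finset.disjoint_left]
      intro a ha
      rw [← hMh] at ha
      obtain ⟨n, hn, rfl⟩ := Finset.mem_image.1 ha
      exact (hMfacts n hn).1
    have hsupp : (∅ ∪ M).sup Rule.pos = (∅ : Finset α) := by
      rw [Finset.empty_union]
      exact (Finset.sup_eq_bot_iff _ _).2 fun n hn => (hMfacts n hn).2.1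
    have hsupn : (∅ ∪ M).sup Rule.neg = (∅ : Finset α) := by
      rw [Finset.empty_union]
      exact (Finset.sup_eq_bot_iff _ _).2 fun n hn => (hMfacts n hn).2.2
    rw [mem_interp]
    refine ⟨?_, by rw [tp, hsupp], by rw [tn, hsupn]⟩
    rw [th]
    exact Finset.mem_image.2 ⟨r, Finset.mem_filter.2 ⟨hr, hdisj⟩, rfl⟩
  · intro ht
    obtain ⟨hh, hp, hn⟩ := mem_interp.1 ht
    obtain ⟨r, hrmem, hrh⟩ := Finset.mem_image.1 hh
    obtain ⟨hr, hdisj⟩ := Finset.mem_filter.1 hrmem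
    refine ⟨r, hr, ∅, r.neg.image (fun a => (⟨a, ∅, ∅⟩ : Rule α)), ?_⟩
    have hinj : Set.InjOn (fun a => (⟨a, ∅, ∅⟩ : Rule α)) r.neg := by
      intro a _ b _ hab; exact congrArg Rule.head hab
    refine ⟨Finset.empty_subset _, ?_, by simp [hN r hr], Finset.card_image_of_injOn hinj, by simp [hN r hr], ?_, hrh.symm, ?_, ?_⟩
    · intro n hn'
      obtain ⟨a, ha, rfl⟩ := Finset.mem_image.1 hn'
      exact mem_interp.2 ⟨Finset.mem_compl.2 (Finset.disjoint_left.1 hdisj ha), rfl, rfl⟩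
    · rw [Finset.image_image]; exact Finset.image_id
    · rw [Finset.empty_union, hp]
      symm
      refine (Finset.sup_eq_bot_iff _ _).2 fun n hn' => ?_
      obtain ⟨a, _, rfl⟩ := Finset.mem_image.1 hn'
      rfl
    · rw [Finset.empty_union, hn]
      symm
      refine (Finset.sup_eq_bot_iff _ _).2 fun n hn' => ?_
      obtain ⟨a, _, rfl⟩ := Finset.mem_image.1 hn'
      rfl
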